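/- arXiv:1911.03637 — 3 statements merged into one kernel-verified Lean document; each statement's English description precedes it below -/
import Mathlib

section
/- Let D1 and D2 be strongly connected digraphs. Then for every vertex u_i of D1 and v_r of D2, the eccentricity in the strong product satisfies ecc_{D1⊠D2}((u_i,v_r)) = max{ecc_{D1}(u_i), ecc_{D2}(v_r)}. -/
/-- A digraph on a vertex type `V`: a set of directed edges (ordered pairs of
distinct vertices), i.e. an irreflexive adjacency relation (no loops, and no
parallel edges since edges form a set). -/
structure Digr (V : Type*) where
  Adj : V → V → Prop
  loopless : ∀ v, ¬ Adj v v

namespace Digr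

variable {V : Type*} {W : Type*}

/-- `D.Reaches u v` : there is a directed path (walk) from `u` to `v`. -/
def Reaches (D : Digr V) (u v : V) : Prop :=
  ∃ (n : ℕ) (f : Fin (n + 1) → V), f 0 = u ∧ f (Fin.last n) = v ∧
    ∀ i : Fin n, D.Adj (f i.castSucc) (f i.succ)

/-- A digraph is strongly connected if every vertex reaches every vertex. -/
def StronglyConnected (D : Digr V) : Prop := ∀ u v : V, D.Reaches u v

/-- The directed distance `→d(u,v)`: the length of a shortest directed
`u`–`v` path. -/
noncomputable def ddist (D : Digr V) (u v : V) : ℕ :=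
  sInf {n : ℕ | ∃ f : Fin (n + 1) → V, f 0 = u ∧ f (Fin.last n) = v ∧
    ∀ i : Fin n, D.Adj (f i.castSucc) (f i.succ)}

/-- The maximum distance `md(u,v) = max {→d(u,v), →d(v,u)}`. -/
noncomputable def mdist (D : Digr V) (u v : V) : ℕ :=
  max (D.ddist u v) (D.ddist v u)

/-- The eccentricity of a vertex with respect to the maximum distance. -/
noncomputable def ecc [Fintype V] (D : Digr V) (u : V) : ℕ :=
  Finset.univ.sup fun v => D.mdist u v

/-- The radius with respect to the maximum distance. -/
noncomputable def rad [Fintype V] [Nonempty V] (D : Digr V) : ℕ :=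
  Finset.univ.inf' Finset.univ_nonempty fun v => D.ecc v

/-- The diameter with respect to the maximum distance. -/
noncomputable def diam [Fintype V] (D : Digr V) : ℕ :=
  Finset.univ.sup fun v => D.ecc v

/-- Out-neighbourhood. -/
def outNbhd (D : Digr V) (v : V) : Set V := {u | D.Adj v u}

/-- In-neighbourhood. -/
def inNbhd (D : Digr V) (v : V) : Set V := {u | D.Adj u v}

/-- Neighbourhood `N(v) = N⁺(v) ∪ N⁻(v)`. -/
def nbhd (D : Digr V) (v : V) : Set V := D.outNbhd v ∪ D.inNbhd v

/-- Closed neighbourhood `N[v] = N(v) ∪ {v}`. -/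
def closedNbhd (D : Digr V) (v : V) : Set V := D.nbhd v ∪ {v}

/-- The boundary `∂(D)`. -/
noncomputable def boundary (D : Digr V) : Set V :=
  {v | ∃ u : V, ∀ w ∈ D.nbhd v, D.mdist u w ≤ D.mdist u v}

/-- The contour `Ct(D)`. -/
noncomputable def contour [Fintype V] (D : Digr V) : Set V :=
  {v | ∀ u ∈ D.nbhd v, D.ecc u ≤ D.ecc v}

/-- The eccentricity set `Ecc(D)`. -/
noncomputable def eccSet [Fintype V] (D : Digr V) : Set V :=
  {v | ∃ u : V, D.ecc u = D.mdist u v}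

/-- The periphery `Per(D) = {v : ecc(v) = diam(D)}`. -/
noncomputable def periphery [Fintype V] (D : Digr V) : Set V :=
  {v | D.ecc v = D.diam}

/-- The strong product of two digraphs. -/
def strongProd (D₁ : Digr V) (D₂ : Digr W) : Digr (V × W) where
  Adj p q :=
    (D₁.Adj p.1 q.1 ∧ p.2 = q.2) ∨ (p.1 = q.1 ∧ D₂.Adj p.2 q.2) ∨
      (D₁.Adj p.1 q.1 ∧ D₂.Adj p.2 q.2)
  loopless := by
    rintro ⟨a, b⟩ (⟨h, -⟩ | ⟨-, h⟩ | ⟨h, -⟩)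
    · exact D₁.loopless a h
    · exact D₂.loopless b h
    · exact D₁.loopless a h

end Digr

namespace DigrAux

open Digr

variable {V : Type*} {W : Type*}

/-- ℕ-indexed walks. -/
def NW (D : Digr V) (u v : V) (n : ℕ) : Prop :=
  ∃ f : ℕ → V, f 0 = u ∧ f n = v ∧ ∀ i < n, D.Adj (f i) (f (i + 1))

/-- Lazy ℕ-indexed walks. -/
def LNW (D : Digr V) (u v : V) (n : ℕ) : Prop :=
  ∃ f : ℕ → V, f 0 = u ∧ f n = v ∧ ∀ i < n, f i = f (i + 1) ∨ D.Adj (f i) (f (i + 1))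

lemma walkSet_eq (D : Digr V) (u v : V) :
    {n : ℕ | ∃ f : Fin (n + 1) → V, f 0 = u ∧ f (Fin.last n) = v ∧
      ∀ i : Fin n, D.Adj (f i.castSucc) (f i.succ)} = {n | NW D u v n} := by
  ext n
  constructor
  · rintro ⟨f, h0, hl, hs⟩
    refine ⟨fun k => f ⟨min k n, by omega⟩, ?_, ?_, ?_⟩
    · exact (congrArg f (Fin.ext (by simp))).trans h0
    · exact (congrArg f (Fin.ext (by simp [Fin.last]))).trans hl
    · intro i hi
      have := hs ⟨i, hi⟩
      convert this using 2 <;> exact Fin.ext (by simp; omega)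
  · rintro ⟨f, h0, hl, hs⟩
    refine ⟨fun k => f k.val, by simpa using h0, by simpa using hl, ?_⟩
    intro i
    simpa using hs i.val i.isLt

lemma ddist_eq (D : Digr V) (u v : V) :
    D.ddist u v = sInf {n | NW D u v n} := by
  rw [Digr.ddist, walkSet_eq]

lemma NW.refl (D : Digr V) (u : V) : NW D u u 0 :=
  ⟨fun _ => u, rfl, rfl, by omega⟩

lemma NW.snoc {D : Digr V} {u w v : V} {n : ℕ} (h : NW D u w n) (ha : D.Adj w v) :
    NW D u v (n + 1) := by
  obtain ⟨f, h0, hl, hs⟩ := h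
  refine ⟨fun k => if k ≤ n then f k else v, by simp [h0], by simp, ?_⟩
  intro i hi
  rcases Nat.lt_or_ge i n with h' | h'
  · have : i ≤ n := by omega
    have : i + 1 ≤ n := by omega
    simpa [show i ≤ n by omega, this] using hs i h'
  · have hin : i = n := by omega
    subst hin
    simpa [hl] using ha

lemma lnw_to_nw {D : Digr V} {u v : V} :
    ∀ n, LNW D u v n → ∃ m ≤ n, NW D u v m := by
  intro n
  induction n generalizing v with
  | zero =>
    rintro ⟨f, h0, hl, -⟩
    exact ⟨0, le_rfl, by rw [← h0, hl]; exact NW.refl D v⟩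
  | succ n ih =>
    rintro ⟨f, h0, hl, hs⟩
    obtain ⟨m, hm, hw⟩ := ih (v := f n) ⟨f, h0, rfl, fun i hi => hs i (by omega)⟩
    rcases hs n (by omega) with he | ha
    · rw [hl] at he
      exact ⟨m, by omega, by rwa [he] at hw⟩
    · rw [hl] at ha
      exact ⟨m + 1, by omega, hw.snoc ha⟩

lemma reaches_iff {D : Digr V} {u v : V} :
    D.Reaches u v ↔ ∃ n, NW D u v n := by
  constructor
  · rintro ⟨n, f, hf⟩
    refine ⟨n, ?_⟩
    have hmem : n ∈ {n : ℕ | ∃ f : Fin (n + 1) → V, f 0 = u ∧ f (Fin.last n) = v ∧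
        ∀ i : Fin n, D.Adj (f i.castSucc) (f i.succ)} := ⟨f, hf⟩
    rwa [walkSet_eq] at hmem
  · rintro ⟨n, hn⟩
    have : n ∈ {n | NW D u v n} := hn
    rw [← walkSet_eq] at this
    obtain ⟨f, hf⟩ := this
    exact ⟨n, f, hf⟩

lemma nw_ddist {D : Digr V} {u v : V} (h : D.Reaches u v) :
    NW D u v (D.ddist u v) := by
  rw [ddist_eq]
  exact Nat.sInf_mem (reaches_iff.mp h)

lemma ddist_le {D : Digr V} {u v : V} {n : ℕ} (h : NW D u v n) :
    D.ddist u v ≤ n := by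
  rw [ddist_eq]; exact Nat.sInf_le h

/-- Combining walks in the factors gives a walk in the strong product. -/
lemma nw_prod {D₁ : Digr V} {D₂ : Digr W} {u u' : V} {v v' : W} {a b : ℕ}
    (hg : NW D₁ u u' a) (hh : NW D₂ v v' b) :
    NW (D₁.strongProd D₂) (u, v) (u', v') (max a b) := by
  obtain ⟨g, g0, gl, gs⟩ := hg
  obtain ⟨h, h0, hl, hs⟩ := hh
  refine ⟨fun k => (g (min k a), h (min k b)), ?_, ?_, ?_⟩
  · simp [g0, h0]
  · simp [gl, hl]
  · intro i hi
    rcases Nat.lt_or_ge i a with ha | ha <;> rcases Nat.lt_or_ge i b with hb | hb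
    · refine Or.inr (Or.inr ⟨?_, ?_⟩)
      · simpa [Nat.min_eq_left (by omega : i ≤ a), Nat.min_eq_left (by omega : i + 1 ≤ a)]
          using gs i ha
      · simpa [Nat.min_eq_left (by omega : i ≤ b), Nat.min_eq_left (by omega : i + 1 ≤ b)]
          using hs i hb
    · refine Or.inl ⟨?_, ?_⟩
      · simpa [Nat.min_eq_left (by omega : i ≤ a), Nat.min_eq_left (by omega : i + 1 ≤ a)]
          using gs i ha
      · simp [Nat.min_eq_right (by omega : b ≤ i), Nat.min_eq_right (by omega : b ≤ i + 1)]
    · refine Or.inr (Or.inl ⟨?_, ?_⟩)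
      · simp [Nat.min_eq_right (by omega : a ≤ i), Nat.min_eq_right (by omega : a ≤ i + 1)]
      · simpa [Nat.min_eq_left (by omega : i ≤ b), Nat.min_eq_left (by omega : i + 1 ≤ b)]
          using hs i hb
    · omega

/-- Projecting a walk in the product gives lazy walks in the factors. -/
lemma nw_proj {D₁ : Digr V} {D₂ : Digr W} {u u' : V} {v v' : W} {n : ℕ}
    (h : NW (D₁.strongProd D₂) (u, v) (u', v') n) :
    LNW D₁ u u' n ∧ LNW D₂ v v' n := by
  obtain ⟨f, h0, hl, hs⟩ := h
  constructor
  · refine ⟨fun k => (f k).1, by show (f 0).1 = u; rw [h0], by show (f n).1 = u'; rw [hl], ?_⟩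
    intro i hi
    rcases hs i hi with ⟨ha, -⟩ | ⟨he, -⟩ | ⟨ha, -⟩
    · exact Or.inr ha
    · exact Or.inl he
    · exact Or.inr ha
  · refine ⟨fun k => (f k).2, by show (f 0).2 = v; rw [h0], by show (f n).2 = v'; rw [hl], ?_⟩
    intro i hi
    rcases hs i hi with ⟨-, he⟩ | ⟨-, ha⟩ | ⟨-, ha⟩
    · exact Or.inl he
    · exact Or.inr ha
    · exact Or.inr ha

lemma ddist_prod {D₁ : Digr V} {D₂ : Digr W}
    (h₁ : D₁.StronglyConnected) (h₂ : D₂.StronglyConnected)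
    (u u' : V) (v v' : W) :
    (D₁.strongProd D₂).ddist (u, v) (u', v') = max (D₁.ddist u u') (D₂.ddist v v') := by
  apply le_antisymm
  · exact ddist_le (nw_prod (nw_ddist (h₁ u u')) (nw_ddist (h₂ v v')))
  · have hr : (D₁.strongProd D₂).Reaches (u, v) (u', v') :=
      reaches_iff.mpr ⟨_, nw_prod (nw_ddist (h₁ u u')) (nw_ddist (h₂ v v'))⟩
    obtain ⟨hp1, hp2⟩ := nw_proj (nw_ddist hr)
    obtain ⟨m₁, hm₁, hw₁⟩ := lnw_to_nw _ hp1
    obtain ⟨m₂, hm₂, hw₂⟩ := lnw_to_nw _ hp2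
    have := le_trans (ddist_le hw₁) hm₁
    have := le_trans (ddist_le hw₂) hm₂
    omega

lemma mdist_prod {D₁ : Digr V} {D₂ : Digr W}
    (h₁ : D₁.StronglyConnected) (h₂ : D₂.StronglyConnected)
    (u u' : V) (v v' : W) :
    (D₁.strongProd D₂).mdist (u, v) (u', v') = max (D₁.mdist u u') (D₂.mdist v v') := by
  rw [Digr.mdist, ddist_prod h₁ h₂, ddist_prod h₁ h₂, Digr.mdist, Digr.mdist]
  omega

lemma mdist_self {D : Digr V} (u : V) : D.mdist u u = 0 := by
  have : D.ddist u u = 0 := Nat.le_zero.mp (ddist_le (NW.refl D u))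
  simp [Digr.mdist, this]

end DigrAux

/-- eccentricity in the strong product is the max of the
eccentricities in the factors. -/
theorem ecc_strongProd {V W : Type*} [Fintype V] [Fintype W]
    (D₁ : Digr V) (D₂ : Digr W)
    (h₁ : D₁.StronglyConnected) (h₂ : D₂.StronglyConnected) :
    ∀ (uᵢ : V) (vᵣ : W),
      (D₁.strongProd D₂).ecc (uᵢ, vᵣ) = max (D₁.ecc uᵢ) (D₂.ecc vᵣ) := by
  intro u v
  apply le_antisymm
  · apply Finset.sup_le
    rintro ⟨u', v'⟩ -
    rw [DigrAux.mdist_prod h₁ h₂]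
    exact max_le_max (Finset.le_sup (Finset.mem_univ u')) (Finset.le_sup (Finset.mem_univ v'))
  · apply max_le
    · apply Finset.sup_le
      intro u' _
      have h := DigrAux.mdist_prod h₁ h₂ u u' v v
      rw [DigrAux.mdist_self] at h
      calc D₁.mdist u u' ≤ (D₁.strongProd D₂).mdist (u, v) (u', v) := by omega
        _ ≤ _ := Finset.le_sup (Finset.mem_univ (u', v))
    · apply Finset.sup_le
      intro v' _
      have h := DigrAux.mdist_prod h₁ h₂ u u v v'
      rw [DigrAux.mdist_self] at h
      calc D₂.mdist v v' ≤ (D₁.strongProd D₂).mdist (u, v) (u, v') := by omega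
        _ ≤ _ := Finset.le_sup (Finset.mem_univ (u, v'))
end

section
/- Let D1 and D2 be strongly connected digraphs. Then rad(D1 ⊠ D2) = max{rad(D1), rad(D2)}, where the radius is taken with respect to the maximum distance. -/
namespace Digr

variable {V : Type*} {W : Type*}

/-- ℕ-indexed walks. -/
def NWalk (D : Digr V) (n : ℕ) (u v : V) : Prop :=
  ∃ f : ℕ → V, f 0 = u ∧ f n = v ∧ ∀ i < n, D.Adj (f i) (f (i + 1))

/-- Lazy walks: each step stays put or moves along an edge. -/
def LWalk (D : Digr V) (n : ℕ) (u v : V) : Prop :=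
  ∃ f : ℕ → V, f 0 = u ∧ f n = v ∧ ∀ i < n, f i = f (i + 1) ∨ D.Adj (f i) (f (i + 1))

lemma finwalk_iff_nwalk (D : Digr V) (n : ℕ) (u v : V) :
    (∃ f : Fin (n + 1) → V, f 0 = u ∧ f (Fin.last n) = v ∧
      ∀ i : Fin n, D.Adj (f i.castSucc) (f i.succ)) ↔ D.NWalk n u v := by
  constructor
  · rintro ⟨f, h0, hn, hs⟩
    refine ⟨fun i => f ⟨min i n, by omega⟩, ?_, ?_, ?_⟩
    · show f ⟨min 0 n, by omega⟩ = u
      rw [← h0]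
      exact congrArg f (Fin.ext (by simp))
    · show f ⟨min n n, by omega⟩ = v
      rw [← hn]
      exact congrArg f (Fin.ext (by simp [Fin.last]))
    · intro i hi
      have e1 : (⟨min i n, by omega⟩ : Fin (n + 1)) = (⟨i, hi⟩ : Fin n).castSucc :=
        Fin.ext (by show min i n = i; omega)
      have e2 : (⟨min (i + 1) n, by omega⟩ : Fin (n + 1)) = (⟨i, hi⟩ : Fin n).succ :=
        Fin.ext (by show min (i + 1) n = i + 1; omega)
      show D.Adj (f ⟨min i n, by omega⟩) (f ⟨min (i + 1) n, by omega⟩)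
      rw [e1, e2]
      exact hs ⟨i, hi⟩
  · rintro ⟨f, h0, hn, hs⟩
    refine ⟨fun i => f i.val, ?_, ?_, ?_⟩
    · simpa using h0
    · simpa [Fin.last] using hn
    · intro i
      exact hs i.val i.isLt

lemma ddist_eq_sInf (D : Digr V) (u v : V) :
    D.ddist u v = sInf {n | D.NWalk n u v} := by
  unfold ddist
  congr 1
  ext n
  exact finwalk_iff_nwalk D n u v

lemma nwalk_ddist (D : Digr V) {u v : V} (h : ∃ n, D.NWalk n u v) :
    D.NWalk (D.ddist u v) u v := by
  rw [ddist_eq_sInf]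
  exact Nat.sInf_mem h

lemma ddist_le_of_nwalk (D : Digr V) {n : ℕ} {u v : V} (h : D.NWalk n u v) :
    D.ddist u v ≤ n := by
  rw [ddist_eq_sInf]
  exact Nat.sInf_le h

lemma lwalk_of_nwalk_le (D : Digr V) {m n : ℕ} {u v : V}
    (h : D.NWalk m u v) (hmn : m ≤ n) : D.LWalk n u v := by
  obtain ⟨f, h0, hm, hs⟩ := h
  refine ⟨fun i => f (min i m), by simpa using h0, ?_, ?_⟩
  · simpa [Nat.min_eq_right hmn] using hm
  · intro i hi
    by_cases hc : i < m
    · right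
      have e1 : min i m = i := by omega
      have e2 : min (i + 1) m = i + 1 := by omega
      simp only [e1, e2]
      exact hs i hc
    · left
      have e1 : min i m = m := by omega
      have e2 : min (i + 1) m = m := by omega
      simp only [e1, e2]

lemma exists_nwalk_of_lwalk (D : Digr V) :
    ∀ n (u v : V), D.LWalk n u v → ∃ m ≤ n, D.NWalk m u v := by
  intro n
  induction n with
  | zero =>
    rintro u v ⟨f, h0, hn, -⟩
    exact ⟨0, le_refl 0, f, h0, hn, by omega⟩
  | succ n ih =>
    rintro u v ⟨f, h0, hn, hs⟩
    obtain ⟨m, hm, g, g0, gm, gs⟩ :=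
      ih (f 1) v ⟨fun i => f (i + 1), rfl, hn, fun i hi => hs (i + 1) (by omega)⟩
    rcases hs 0 (by omega) with heq | hadj
    · exact ⟨m, by omega, g, by rw [g0, ← heq, h0], gm, gs⟩
    · refine ⟨m + 1, by omega, fun i => match i with | 0 => u | j + 1 => g j, rfl, gm, ?_⟩
      intro i hi
      match i with
      | 0 => simpa [g0, ← h0] using hadj
      | j + 1 => exact gs j (by omega)

lemma ddist_le_of_lwalk (D : Digr V) {n : ℕ} {u v : V} (h : D.LWalk n u v) :
    D.ddist u v ≤ n := by
  obtain ⟨m, hm, hw⟩ := D.exists_nwalk_of_lwalk n u v h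
  exact le_trans (D.ddist_le_of_nwalk hw) hm

lemma ddist_strongProd (D₁ : Digr V) (D₂ : Digr W)
    (h₁ : D₁.StronglyConnected) (h₂ : D₂.StronglyConnected) (p q : V × W) :
    (D₁.strongProd D₂).ddist p q = max (D₁.ddist p.1 q.1) (D₂.ddist p.2 q.2) := by
  set d1 := D₁.ddist p.1 q.1 with hd1
  set d2 := D₂.ddist p.2 q.2 with hd2
  obtain ⟨f1, f10, f1n, f1s⟩ : D₁.NWalk d1 p.1 q.1 := by
    refine D₁.nwalk_ddist ?_
    obtain ⟨n, f, hf⟩ := h₁ p.1 q.1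
    exact ⟨n, (D₁.finwalk_iff_nwalk n p.1 q.1).1 ⟨f, hf⟩⟩
  obtain ⟨f2, f20, f2n, f2s⟩ : D₂.NWalk d2 p.2 q.2 := by
    refine D₂.nwalk_ddist ?_
    obtain ⟨n, f, hf⟩ := h₂ p.2 q.2
    exact ⟨n, (D₂.finwalk_iff_nwalk n p.2 q.2).1 ⟨f, hf⟩⟩
  have hup : (D₁.strongProd D₂).NWalk (max d1 d2) p q := by
    refine ⟨fun i => (f1 (min i d1), f2 (min i d2)), ?_, ?_, ?_⟩
    · simp [f10, f20]
    · simp [Nat.min_eq_right (le_max_left d1 d2), Nat.min_eq_right (le_max_right d1 d2),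
        f1n, f2n]
    · intro i hi
      by_cases c1 : i < d1 <;> by_cases c2 : i < d2
      · refine Or.inr (Or.inr ⟨?_, ?_⟩)
        · have e1 : min i d1 = i := by omega
          have e2 : min (i + 1) d1 = i + 1 := by omega
          simp only [e1, e2]; exact f1s i c1
        · have e1 : min i d2 = i := by omega
          have e2 : min (i + 1) d2 = i + 1 := by omega
          simp only [e1, e2]; exact f2s i c2
      · refine Or.inl ⟨?_, ?_⟩
        · have e1 : min i d1 = i := by omega
          have e2 : min (i + 1) d1 = i + 1 := by omega
          simp only [e1, e2]; exact f1s i c1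
        · have e1 : min i d2 = d2 := by omega
          have e2 : min (i + 1) d2 = d2 := by omega
          simp [e1, e2]
      · refine Or.inr (Or.inl ⟨?_, ?_⟩)
        · have e1 : min i d1 = d1 := by omega
          have e2 : min (i + 1) d1 = d1 := by omega
          simp [e1, e2]
        · have e1 : min i d2 = i := by omega
          have e2 : min (i + 1) d2 = i + 1 := by omega
          simp only [e1, e2]; exact f2s i c2
      · omega
  have hle : (D₁.strongProd D₂).ddist p q ≤ max d1 d2 :=
    (D₁.strongProd D₂).ddist_le_of_nwalk hup
  obtain ⟨h, hp0, hpn, hps⟩ : (D₁.strongProd D₂).NWalk ((D₁.strongProd D₂).ddist p q) p q :=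
    (D₁.strongProd D₂).nwalk_ddist ⟨max d1 d2, hup⟩
  have l1 : D₁.LWalk ((D₁.strongProd D₂).ddist p q) p.1 q.1 := by
    refine ⟨fun i => (h i).1, by simp [hp0], by simp [hpn], ?_⟩
    intro i hi
    rcases hps i hi with ⟨a, -⟩ | ⟨a, -⟩ | ⟨a, -⟩
    · exact Or.inr a
    · exact Or.inl a
    · exact Or.inr a
  have l2 : D₂.LWalk ((D₁.strongProd D₂).ddist p q) p.2 q.2 := by
    refine ⟨fun i => (h i).2, by simp [hp0], by simp [hpn], ?_⟩
    intro i hi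
    rcases hps i hi with ⟨-, a⟩ | ⟨-, a⟩ | ⟨-, a⟩
    · exact Or.inl a
    · exact Or.inr a
    · exact Or.inr a
  exact le_antisymm hle (max_le (D₁.ddist_le_of_lwalk l1) (D₂.ddist_le_of_lwalk l2))

lemma mdist_strongProd (D₁ : Digr V) (D₂ : Digr W)
    (h₁ : D₁.StronglyConnected) (h₂ : D₂.StronglyConnected) (p q : V × W) :
    (D₁.strongProd D₂).mdist p q = max (D₁.mdist p.1 q.1) (D₂.mdist p.2 q.2) := by
  unfold mdist
  rw [ddist_strongProd D₁ D₂ h₁ h₂ p q, ddist_strongProd D₁ D₂ h₁ h₂ q p]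
  omega

lemma ecc_strongProd [Fintype V] [Fintype W] (D₁ : Digr V) (D₂ : Digr W)
    (h₁ : D₁.StronglyConnected) (h₂ : D₂.StronglyConnected) (p : V × W) :
    (D₁.strongProd D₂).ecc p = max (D₁.ecc p.1) (D₂.ecc p.2) := by
  apply le_antisymm
  · apply Finset.sup_le
    intro q _
    rw [mdist_strongProd D₁ D₂ h₁ h₂ p q]
    exact max_le_max (Finset.le_sup (Finset.mem_univ q.1)) (Finset.le_sup (Finset.mem_univ q.2))
  · apply max_le
    · apply Finset.sup_le
      intro x _
      calc D₁.mdist p.1 x ≤ (D₁.strongProd D₂).mdist p (x, p.2) := by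
            rw [mdist_strongProd D₁ D₂ h₁ h₂ p (x, p.2)]; exact le_max_left _ _
        _ ≤ _ := Finset.le_sup (Finset.mem_univ (x, p.2))
    · apply Finset.sup_le
      intro x _
      calc D₂.mdist p.2 x ≤ (D₁.strongProd D₂).mdist p (p.1, x) := by
            rw [mdist_strongProd D₁ D₂ h₁ h₂ p (p.1, x)]; exact le_max_right _ _
        _ ≤ _ := Finset.le_sup (Finset.mem_univ (p.1, x))

end Digr

/-- radius of the strong product. -/
theorem rad_strongProd {V W : Type*} [Fintype V] [Fintype W]
    [Nonempty V] [Nonempty W]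
    (D₁ : Digr V) (D₂ : Digr W)
    (h₁ : D₁.StronglyConnected) (h₂ : D₂.StronglyConnected) :
    (D₁.strongProd D₂).rad = max D₁.rad D₂.rad := by
  apply le_antisymm
  · obtain ⟨u0, -, hu0⟩ := Finset.exists_mem_eq_inf' (Finset.univ_nonempty (α := V)) D₁.ecc
    obtain ⟨v0, -, hv0⟩ := Finset.exists_mem_eq_inf' (Finset.univ_nonempty (α := W)) D₂.ecc
    calc (D₁.strongProd D₂).rad ≤ (D₁.strongProd D₂).ecc (u0, v0) :=
          Finset.inf'_le _ (Finset.mem_univ _)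
      _ = max (D₁.ecc u0) (D₂.ecc v0) := Digr.ecc_strongProd D₁ D₂ h₁ h₂ (u0, v0)
      _ = max D₁.rad D₂.rad := by rw [Digr.rad, Digr.rad, hu0, hv0]
  · apply Finset.le_inf'
    intro p _
    rw [Digr.ecc_strongProd D₁ D₂ h₁ h₂ p]
    exact max_le_max (Finset.inf'_le _ (Finset.mem_univ _))
      (Finset.inf'_le _ (Finset.mem_univ _))
end

section
/- For every strongly connected digraph D, Ecc(D) ∪ Ct(D) ⊆ ∂(D), where the eccentricity set, contour and boundary are taken with respect to the maximum distance. -/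
/-- `Ecc(D) ∪ Ct(D) ⊆ ∂(D)`. -/
theorem eccSet_union_contour_subset_boundary {V : Type*} [Fintype V]
    (D : Digr V) (h : D.StronglyConnected) :
    D.eccSet ∪ D.contour ⊆ D.boundary := by

  rintro v (⟨u, hu⟩ | hv)
  · exact ⟨u, fun w _ => hu ▸ Finset.le_sup (Finset.mem_univ w)⟩
  · have : Nonempty V := ⟨v⟩
    obtain ⟨u, -, hu⟩ := Finset.exists_mem_eq_sup Finset.univ Finset.univ_nonempty
      (fun w => D.mdist v w)
    refine ⟨u, fun w hw => ?_⟩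
    have h1 : D.mdist u w ≤ D.ecc w := by
      rw [show D.mdist u w = D.mdist w u from max_comm _ _]
      exact Finset.le_sup (Finset.mem_univ u)
    have h2 : D.ecc w ≤ D.ecc v := hv w hw
    have h3 : D.ecc v = D.mdist u v := by
      rw [show D.mdist u v = D.mdist v u from max_comm _ _]; exact hu
    omega
end
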